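/- arXiv:2412.17122 — 4 statements merged into one kernel-verified Lean document; each statement's English description precedes it below -/
import Mathlib

section
/- Let A and B be 2×2 real symmetric matrices with all entries strictly positive, satisfying A₁₁ > A₂₂, B₁₁ > B₂₂, and A₁₁B₂₂ = A₂₂B₁₁. Let M = A⊗B (indexed 1..4 via (i,k) ↦ 2(i−1)+k). If the multiset of entries of row 2 of M, namely {A₁₁B₁₂, A₁₁B₂₂, A₁₂B₁₂, A₁₂B₂₂}, equals the multiset of entries of row 3 of M, namely {A₁₂B₁₁, A₁₂B₁₂, A₂₂B₁₁, A₂₂B₁₂}, then A₁₁/A₁₂ = B₁₁/B₁₂ and A₂₂/A₁₂ = B₂₂/B₁₂; consequently B = κ·A where κ = B₁₂/A₁₂ > 0. -/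
/-!
Since `A₁₁B₂₂ = A₂₂B₁₁`, the two rows share the entries `A₁₂B₁₂` and `A₁₁B₂₂`; cancelling them
leaves `{A₁₁B₁₂, A₁₂B₂₂} = {A₁₂B₁₁, A₂₂B₁₂}`. Matching `A₁₁B₁₂` with `A₂₂B₁₂` would force
`A₁₁ = A₂₂`, so `A₁₁B₁₂ = A₁₂B₁₁` and `A₁₂B₂₂ = A₂₂B₁₂`, which are the two ratio identities.
-/

theorem Multiset.pair_eq_pair_iff {α : Type*} {a b c d : α} :
    ({a, b} : Multiset α) = {c, d} ↔ a = c ∧ b = d ∨ a = d ∧ b = c := by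
  simp only [Multiset.insert_eq_cons, Multiset.cons_eq_cons, Multiset.singleton_inj,
    Multiset.singleton_eq_cons_iff]
  constructor
  · aesop
  · rintro (⟨rfl, rfl⟩ | ⟨rfl, rfl⟩)
    · simp
    · by_cases h : a = b <;> simp [h]

theorem Multiset.pair_eq_pair_of_insert_eq_insert {α : Type*} {x y u v s t : α}
    (h : ({x, s, u, y} : Multiset α) = {v, u, s, t}) : ({x, y} : Multiset α) = {v, t} := by
  rw [← Multiset.cons_inj_right s, ← Multiset.cons_inj_right u]
  simpa only [Multiset.insert_eq_cons, Multiset.cons_swap] using h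

theorem Matrix.eq_smul_of_isSymm_fin_two {R : Type*} [Mul R] {A B : Matrix (Fin 2) (Fin 2) R}
    (hA : A.IsSymm) (hB : B.IsSymm) (k : R) (h₀₀ : B 0 0 = k * A 0 0) (h₀₁ : B 0 1 = k * A 0 1)
    (h₁₁ : B 1 1 = k * A 1 1) : B = k • A := by
  have h₁₀ : B 1 0 = k * A 1 0 := by rw [hA.apply 0 1, hB.apply 0 1, h₀₁]
  ext i j
  fin_cases i <;> fin_cases j <;> assumption

theorem statement7_general (A B : Matrix (Fin 2) (Fin 2) ℝ)
    (hAs : A.IsSymm) (hBs : B.IsSymm)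
    (hApos : ∀ i j, 0 < A i j) (hBpos : ∀ i j, 0 < B i j)
    (hAd : A 1 1 < A 0 0)
    (hcross : A 0 0 * B 1 1 = A 1 1 * B 0 0)
    (hrows : ({A 0 0 * B 0 1, A 0 0 * B 1 1, A 0 1 * B 0 1, A 0 1 * B 1 1} : Multiset ℝ) =
             ({A 0 1 * B 0 0, A 0 1 * B 0 1, A 1 1 * B 0 0, A 1 1 * B 0 1} : Multiset ℝ)) :
    A 0 0 / A 0 1 = B 0 0 / B 0 1 ∧
    A 1 1 / A 0 1 = B 1 1 / B 0 1 ∧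
    0 < B 0 1 / A 0 1 ∧
    B = (B 0 1 / A 0 1) • A := by
  have hp := (hApos 0 1).ne'
  have hq := (hBpos 0 1).ne'
  rw [← hcross] at hrows
  obtain ⟨h₀₀, h₁₁⟩ : A 0 0 * B 0 1 = A 0 1 * B 0 0 ∧ A 0 1 * B 1 1 = A 1 1 * B 0 1 := by
    rcases Multiset.pair_eq_pair_iff.mp (Multiset.pair_eq_pair_of_insert_eq_insert hrows) with
      h | ⟨h, -⟩
    · exact h
    · exact absurd (mul_right_cancel₀ hq h) hAd.ne'
  refine ⟨by rw [div_eq_div_iff hp hq, h₀₀, mul_comm],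
    by rw [div_eq_div_iff hp hq, ← h₁₁, mul_comm], div_pos (hBpos 0 1) (hApos 0 1),
    Matrix.eq_smul_of_isSymm_fin_two hAs hBs _ ?_ ?_ ?_⟩
  · field_simp
    linarith
  · field_simp
  · field_simp
    linarith

/-- Let `A`, `B` be `2 × 2` real symmetric matrices with strictly positive
entries, `A₁₁ > A₂₂`, `B₁₁ > B₂₂` and `A₁₁B₂₂ = A₂₂B₁₁`.  If the multiset of
entries of row 2 of `M = A ⊗ B`, namely `{A₁₁B₁₂, A₁₁B₂₂, A₁₂B₁₂, A₁₂B₂₂}`,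
equals the multiset of entries of row 3, namely
`{A₁₂B₁₁, A₁₂B₁₂, A₂₂B₁₁, A₂₂B₁₂}`, then `A₁₁/A₁₂ = B₁₁/B₁₂`,
`A₂₂/A₁₂ = B₂₂/B₁₂`, and `B = κ • A` with `κ = B₁₂/A₁₂ > 0`. -/
theorem statement7 (A B : Matrix (Fin 2) (Fin 2) ℝ)
    (hAs : A.IsSymm) (hBs : B.IsSymm)
    (hApos : ∀ i j, 0 < A i j) (hBpos : ∀ i j, 0 < B i j)
    (hAd : A 1 1 < A 0 0) (hBd : B 1 1 < B 0 0)
    (hcross : A 0 0 * B 1 1 = A 1 1 * B 0 0)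
    (hrows : ({A 0 0 * B 0 1, A 0 0 * B 1 1, A 0 1 * B 0 1, A 0 1 * B 1 1} : Multiset ℝ) =
             ({A 0 1 * B 0 0, A 0 1 * B 0 1, A 1 1 * B 0 0, A 1 1 * B 0 1} : Multiset ℝ)) :
    A 0 0 / A 0 1 = B 0 0 / B 0 1 ∧
    A 1 1 / A 0 1 = B 1 1 / B 0 1 ∧
    0 < B 0 1 / A 0 1 ∧
    B = (B 0 1 / A 0 1) • A :=
  statement7_general A B hAs hBs hApos hBpos hAd hcross hrows
end

section
/- Let v₁, v₂ ∈ ℝ⁴ be orthonormal vectors (with respect to the standard inner product), each orthogonal to both (1,1,1,1) and (1,−1,−1,1). Then there exist u, v ∈ ℝ with u² + v² = 2 and ε ∈ {−1, 1} such that v₁ = ½(u, −v, v, −u) and v₂ = (ε/2)(v, u, −u, −v). -/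
/-!
Orthogonality to `(1,1,1,1)` and `(1,−1,−1,1)` forces `v = (a, b, −b, −a)`, so the problem lives in
the plane of `(a, b)`. There, two orthogonal vectors of the same length differ by a quarter turn:
with `δ = ad − bc`, Lagrange's identity gives `δ² = (a² + b²)(c² + d²) − (ac + bd)² = (a² + b²)²`,
and the sign is `ε = δ / (a² + b²)`.
-/

lemma eq_neg_of_add_eq_zero_of_sub_eq_zero {v : Fin 4 → ℝ}
    (ha : v 0 + v 1 + v 2 + v 3 = 0) (hb : v 0 - v 1 - v 2 + v 3 = 0) :
    v 2 = -v 1 ∧ v 3 = -v 0 :=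
  ⟨by linarith, by linarith⟩

lemma exists_sign_eq_rotation_of_orthogonal {K : Type*} [Field K] {a b c d : K}
    (hN : a ^ 2 + b ^ 2 ≠ 0) (horth : a * c + b * d = 0) (hnorm : c ^ 2 + d ^ 2 = a ^ 2 + b ^ 2) :
    ∃ ε : K, (ε = 1 ∨ ε = -1) ∧ c = -(ε * b) ∧ d = ε * a := by
  have hδ : (a * d - b * c) ^ 2 = (a ^ 2 + b ^ 2) ^ 2 := by
    linear_combination (a ^ 2 + b ^ 2) * hnorm - (a * c + b * d) * horth
  refine ⟨(a * d - b * c) / (a ^ 2 + b ^ 2), ?_, ?_, ?_⟩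
  · rcases sq_eq_sq_iff_eq_or_eq_neg.mp hδ with h | h <;> [left; right] <;> field_simp <;>
      linear_combination h
  all_goals field_simp
  · linear_combination a * horth
  · linear_combination b * horth

/-- Let `v₁, v₂ ∈ ℝ⁴` be orthonormal vectors, each orthogonal to both
`(1,1,1,1)` and `(1,−1,−1,1)`.  Then there are `u, v ∈ ℝ` with `u² + v² = 2`
and a sign `ε ∈ {−1,1}` such that `v₁ = ½(u,−v,v,−u)` and
`v₂ = (ε/2)(v,u,−u,−v)`. -/
theorem statement9 (v₁ v₂ : Fin 4 → ℝ)
    (h1 : v₁ 0 ^ 2 + v₁ 1 ^ 2 + v₁ 2 ^ 2 + v₁ 3 ^ 2 = 1)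
    (h2 : v₂ 0 ^ 2 + v₂ 1 ^ 2 + v₂ 2 ^ 2 + v₂ 3 ^ 2 = 1)
    (h12 : v₁ 0 * v₂ 0 + v₁ 1 * v₂ 1 + v₁ 2 * v₂ 2 + v₁ 3 * v₂ 3 = 0)
    (ha1 : v₁ 0 + v₁ 1 + v₁ 2 + v₁ 3 = 0)
    (hb1 : v₁ 0 - v₁ 1 - v₁ 2 + v₁ 3 = 0)
    (ha2 : v₂ 0 + v₂ 1 + v₂ 2 + v₂ 3 = 0)
    (hb2 : v₂ 0 - v₂ 1 - v₂ 2 + v₂ 3 = 0) :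
    ∃ u v ε : ℝ, u ^ 2 + v ^ 2 = 2 ∧ (ε = 1 ∨ ε = -1) ∧
      v₁ = (1 / 2 : ℝ) • ![u, -v, v, -u] ∧
      v₂ = (ε / 2) • ![v, u, -u, -v] := by
  obtain ⟨hv₁2, hv₁3⟩ := eq_neg_of_add_eq_zero_of_sub_eq_zero ha1 hb1
  obtain ⟨hv₂2, hv₂3⟩ := eq_neg_of_add_eq_zero_of_sub_eq_zero ha2 hb2
  rw [hv₁2, hv₁3] at h1 h12
  rw [hv₂2, hv₂3] at h2 h12
  have hN₁ : v₁ 0 ^ 2 + v₁ 1 ^ 2 = 1 / 2 := by linear_combination h1 / 2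
  have hN₂ : v₂ 0 ^ 2 + v₂ 1 ^ 2 = 1 / 2 := by linear_combination h2 / 2
  obtain ⟨ε, hε, hc, hd⟩ := exists_sign_eq_rotation_of_orthogonal (c := v₂ 0) (d := v₂ 1)
    (by rw [hN₁]; norm_num) (by linear_combination h12 / 2) (hN₂.trans hN₁.symm)
  refine ⟨2 * v₁ 0, -2 * v₁ 1, ε, by linear_combination 4 * hN₁, hε, ?_, ?_⟩ <;> ext i <;>
    fin_cases i
  all_goals simp only [Fin.zero_eta, Fin.mk_one, Fin.reduceFinMk, Pi.smul_apply, smul_eq_mul,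
    Matrix.cons_val, Matrix.cons_val_zero, Matrix.cons_val_one, hv₁2, hv₁3, hv₂2, hv₂3, hc, hd]
  all_goals ring
end

section
/- Let M be a 4×4 real symmetric invertible matrix with all entries strictly positive. Suppose there is no permutation σ of {1,2,3,4} and no 2×2 real symmetric matrices A', B' with M_{σ(i)σ(j)} = (A'⊗B')_{ij} for all i,j. Suppose further that M² = A⊗B for some 2×2 real symmetric positive definite matrices A, B with all entries strictly positive satisfying A₁₁ = A₂₂ and B₁₁ = B₂₂. Then there exist u, v ∈ ℝ with u² + v² = 2, κ > 0, and x, y, z ∈ ℝ with 0 < |x|, |y|, |z| < 1 such that M = K·D·Kᵀ, where K is the 4×4 matrix with rows ½(1,u,v,1), ½(1,−v,u,−1), ½(1,v,−u,−1), ½(1,−u,−v,1) and D = κ·diag(1, x, y, z). Moreover: (1) if |x| ≠ |y| then u = v = 1 and z = −xy; (2) if x = y then z = −x²; (3) if x = −y then either z = x², or z = −x² and |u| ≠ |v|. -/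
/-!
Conjugation by the symmetric orthogonal matrix `H = hadamard4` diagonalises `A ⊗ B` whenever
`A = [[a, b], [b, a]]` and `B = [[c, d], [d, c]]`, so `N = H M H` is a symmetric square root of
`diag λ` with `λ = ((a+b)(c+d), (a+b)(c-d), (a-b)(c+d), (a-b)(c-d))`. Positivity of the entries
makes all `λᵢ` distinct except possibly `λ₁ = λ₂`; as `N` commutes with `diag λ` it has the shape
`diag(p, [[q, r], [r, s]], t)`, and `p > 0` because `4p` is the sum of the entries of `M`.
The identity `λ₁λ₂ = λ₀λ₃` is what ties the blocks together. If `r = 0` it gives `qs = ±pt`;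
the sign `+` would make `M` a Kronecker product, so `qs = -pt`, i.e. `z = -xy` with `u = v = 1`.
If `r ≠ 0` then `s = -q`, the middle block is `ρ` times a reflection `[[sin 2θ, cos 2θ],
[cos 2θ, -sin 2θ]]`, which `u = √2 cos θ`, `v = √2 sin θ` absorb into `K`, and then
`λ₁λ₂ = λ₀λ₃` reads `z² = x⁴`.
-/

open Matrix

/-- The Kronecker product of two `2 × 2` matrices as a `4 × 4` matrix, indexed
via the identification `(i,k) ↦ 2(i−1)+k` (1-based). -/
def kron4 (A B : Matrix (Fin 2) (Fin 2) ℝ) : Matrix (Fin 4) (Fin 4) ℝ :=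
  fun i j =>
    A ⟨i.val / 2, by omega⟩ ⟨j.val / 2, by omega⟩ *
    B ⟨i.val % 2, by omega⟩ ⟨j.val % 2, by omega⟩

lemma Matrix.apply_eq_zero_of_commute_diagonal {n R : Type*} [Fintype n] [DecidableEq n]
    [CommRing R] [NoZeroDivisors R] {N : Matrix n n R} {d : n → R}
    (h : Commute N (diagonal d)) {i j : n} (hij : d i ≠ d j) : N i j = 0 := by
  have hij' := congrFun (congrFun h.eq i) j
  rw [mul_diagonal, diagonal_mul] at hij'
  have : N i j * (d j - d i) = 0 := by linear_combination hij'
  exact (mul_eq_zero.mp this).resolve_right (sub_ne_zero.mpr hij.symm)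

lemma isSymm_fin_two {α : Type*} (a b c : α) : !![a, b; b, c].IsSymm := by
  ext i j
  fin_cases i <;> fin_cases j <;> rfl

lemma abs_div_pos_lt_one {K : Type*} [Field K] [LinearOrder K] [IsStrictOrderedRing K] {q p : K}
    (hq : q ≠ 0) (h : q ^ 2 < p ^ 2) : 0 < |q / p| ∧ |q / p| < 1 := by
  have hp : p ≠ 0 := by rintro rfl; nlinarith [sq_nonneg q]
  refine ⟨abs_pos.mpr (div_ne_zero hq hp), ?_⟩
  rw [abs_div, div_lt_one (abs_pos.mpr hp)]
  exact sq_lt_sq.mp h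

lemma exists_sq_add_sq_eq_two (q r : ℝ) : ∃ u v : ℝ, u ^ 2 + v ^ 2 = 2 ∧
    q = √(q ^ 2 + r ^ 2) * (u * v) ∧ r = √(q ^ 2 + r ^ 2) * ((u ^ 2 - v ^ 2) / 2) := by
  set θ := Complex.arg ⟨r, q⟩ / 2
  have hθ : Complex.arg ⟨r, q⟩ = 2 * θ := by ring
  have h2 : √2 ^ 2 = 2 := Real.sq_sqrt zero_le_two
  have hnorm : ‖(⟨r, q⟩ : ℂ)‖ = √(q ^ 2 + r ^ 2) := by
    rw [Complex.norm_def, Complex.normSq_mk]; ring_nf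
  refine ⟨√2 * Real.cos θ, √2 * Real.sin θ, ?_, ?_, ?_⟩
  · linear_combination (2 * Real.sin_sq_add_cos_sq θ) + (Real.cos θ ^ 2 + Real.sin θ ^ 2) * h2
  · have h := Complex.norm_mul_sin_arg ⟨r, q⟩
    rw [hnorm, hθ, Real.sin_two_mul] at h
    linear_combination -h - √(q ^ 2 + r ^ 2) * Real.sin θ * Real.cos θ * h2
  · have h := Complex.norm_mul_cos_arg ⟨r, q⟩
    rw [hnorm, hθ, Real.cos_two_mul'] at h
    linear_combination -h - √(q ^ 2 + r ^ 2) * (Real.cos θ ^ 2 - Real.sin θ ^ 2) / 2 * h2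

noncomputable def twistedHadamard (u v : ℝ) : Matrix (Fin 4) (Fin 4) ℝ :=
  (1 / 2 : ℝ) • !![1, u, v, 1; 1, -v, u, -1; 1, v, -u, -1; 1, -u, -v, 1]

noncomputable def hadamard4 : Matrix (Fin 4) (Fin 4) ℝ := twistedHadamard 1 1

lemma hadamard4_transpose : hadamard4ᵀ = hadamard4 := by
  ext i j
  fin_cases i <;> fin_cases j <;> simp [hadamard4, twistedHadamard]

lemma hadamard4_mul_self : hadamard4 * hadamard4 = 1 := by
  ext i j
  fin_cases i <;> fin_cases j <;>
    simp [hadamard4, twistedHadamard, mul_apply, Fin.sum_univ_four, one_apply] <;> norm_num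

lemma hadamard4_conj_conj (X : Matrix (Fin 4) (Fin 4) ℝ) :
    hadamard4 * (hadamard4 * X * hadamard4) * hadamard4 = X := by
  simp only [← Matrix.mul_assoc, hadamard4_mul_self, Matrix.one_mul]
  simp only [Matrix.mul_assoc, hadamard4_mul_self, Matrix.mul_one]

lemma hadamard4_conj_mul_conj (X Y : Matrix (Fin 4) (Fin 4) ℝ) :
    (hadamard4 * X * hadamard4) * (hadamard4 * Y * hadamard4) =
      hadamard4 * (X * Y) * hadamard4 := by
  simp only [Matrix.mul_assoc]
  rw [← Matrix.mul_assoc hadamard4 hadamard4, hadamard4_mul_self, Matrix.one_mul]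

lemma Matrix.IsSymm.hadamard4_conj {X : Matrix (Fin 4) (Fin 4) ℝ} (hX : X.IsSymm) :
    (hadamard4 * X * hadamard4).IsSymm := by
  simp only [IsSymm, transpose_mul, hadamard4_transpose, hX.eq, Matrix.mul_assoc]

lemma hadamard4_conj_apply_zero_zero (X : Matrix (Fin 4) (Fin 4) ℝ) :
    (hadamard4 * X * hadamard4) 0 0 = (∑ i, ∑ j, X i j) / 4 := by
  simp only [hadamard4, twistedHadamard, one_div, smul_of, smul_cons, smul_eq_mul, mul_one,
    smul_empty, mul_neg, cons_mul, Nat.succ_eq_add_one, Nat.reduceAdd, empty_mul,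
    Equiv.symm_apply_apply, Fin.isValue, mul_apply, of_apply, cons_val', vecMul, dotProduct,
    Fin.sum_univ_four, cons_val_zero, cons_val_one, cons_val, neg_mul, cons_val_fin_one]
  ring

def kronSpectrum (a b c d : ℝ) : Fin 4 → ℝ :=
  ![(a + b) * (c + d), (a + b) * (c - d), (a - b) * (c + d), (a - b) * (c - d)]

lemma kron4_eq_hadamard4_conj (a b c d : ℝ) :
    kron4 !![a, b; b, a] !![c, d; d, c] =
      hadamard4 * diagonal (kronSpectrum a b c d) * hadamard4 := by
  ext i j
  rw [Matrix.mul_assoc]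
  fin_cases i <;> fin_cases j <;>
    simp [kron4, kronSpectrum, hadamard4, twistedHadamard, mul_apply,
      Fin.sum_univ_four] <;> ring

lemma kronSpectrum_spec {a b c d : ℝ} (hb : 0 < b) (hba : b < a) (hd : 0 < d) (hdc : d < c) :
    let l := kronSpectrum a b c d
    0 < l 3 ∧ l 3 < l 1 ∧ l 3 < l 2 ∧ l 1 < l 0 ∧ l 2 < l 0 ∧ l 1 * l 2 = l 0 * l 3 := by
  simp only [kronSpectrum, Matrix.cons_val]
  exact ⟨by nlinarith, by nlinarith, by nlinarith, by nlinarith, by nlinarith, by ring⟩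

lemma Matrix.PosDef.exists_eq_of_apply_zero_zero_eq {A : Matrix (Fin 2) (Fin 2) ℝ}
    (hA : A.PosDef) (hA01 : 0 < A 0 1) (hAd : A 0 0 = A 1 1) :
    ∃ a b : ℝ, A = !![a, b; b, a] ∧ 0 < b ∧ b < a := by
  have hA10 : A 1 0 = A 0 1 := by simpa using hA.isHermitian.apply 0 1
  have hdet : 0 < A 0 0 * A 0 0 - A 0 1 * A 0 1 := by
    simpa [det_fin_two, hA10, ← hAd] using hA.det_pos
  refine ⟨A 0 0, A 0 1, ?_, hA01, by nlinarith [hA.diag_pos (i := 0)]⟩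
  ext i j
  fin_cases i <;> fin_cases j <;> simp [hA10, hAd]

lemma hadamard4_conj_diagonal_eq_kron4 {p q s t : ℝ} (hp : p ≠ 0) (h : q * s = p * t) :
    hadamard4 * diagonal ![p, q, s, t] * hadamard4 =
      kron4 !![(p + s) / 2, (p - s) / 2; (p - s) / 2, (p + s) / 2]
        !![(p + q) / (2 * p), (p - q) / (2 * p); (p - q) / (2 * p), (p + q) / (2 * p)] := by
  -- the witnesses solve `a + b = p`, `a - b = s`, `c + d = 1`, `c - d = q / p`
  have hspec : kronSpectrum ((p + s) / 2) ((p - s) / 2) ((p + q) / (2 * p)) ((p - q) / (2 * p)) =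
      ![p, q, s, t] := by
    ext i
    fin_cases i <;> simp [kronSpectrum] <;> field_simp
    · ring
    · ring
    · ring
    · linear_combination 4 * h
  rw [kron4_eq_hadamard4_conj, hspec]

def block121 (p q r s t : ℝ) : Matrix (Fin 4) (Fin 4) ℝ :=
  !![p, 0, 0, 0; 0, q, r, 0; 0, r, s, 0; 0, 0, 0, t]

lemma block121_zero (p q s t : ℝ) : block121 p q 0 s t = diagonal ![p, q, s, t] := by
  ext i j
  fin_cases i <;> fin_cases j <;> simp [block121]

lemma eq_block121_of_commute_diagonal {N : Matrix (Fin 4) (Fin 4) ℝ} (hN : N.IsSymm)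
    {l : Fin 4 → ℝ} (h : Commute N (diagonal l)) (h01 : l 0 ≠ l 1) (h02 : l 0 ≠ l 2)
    (h03 : l 0 ≠ l 3) (h13 : l 1 ≠ l 3) (h23 : l 2 ≠ l 3) :
    N = block121 (N 0 0) (N 1 1) (N 1 2) (N 2 2) (N 3 3) := by
  have hz := fun {i j : Fin 4} (hij : l i ≠ l j) => apply_eq_zero_of_commute_diagonal h hij
  ext i j
  fin_cases i <;> fin_cases j <;> simp [block121]
  all_goals first
    | exact hN.apply 1 2
    | exact hz ‹_›
    | exact hz (Ne.symm ‹_›)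

lemma block121_mul_self_eq_diagonal {p q r s t : ℝ} {l : Fin 4 → ℝ}
    (h : block121 p q r s t * block121 p q r s t = diagonal l) :
    p ^ 2 = l 0 ∧ q ^ 2 + r ^ 2 = l 1 ∧ r * (q + s) = 0 ∧ r ^ 2 + s ^ 2 = l 2 ∧ t ^ 2 = l 3 := by
  have e := fun i j => congrFun (congrFun h i) j
  have e00 := e 0 0; have e11 := e 1 1; have e12 := e 1 2; have e22 := e 2 2; have e33 := e 3 3
  simp only [block121, Fin.isValue, mul_apply, of_apply, cons_val', cons_val_fin_one, cons_val_zero,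
    Fin.sum_univ_four, cons_val_one, mul_zero, add_zero, cons_val, diagonal_apply_eq, zero_add,
    ne_eq, Fin.reduceEq, not_false_eq_true, diagonal_apply_ne] at e00 e11 e12 e22 e33
  exact ⟨by linear_combination e00, by linear_combination e11, by linear_combination e12,
    by linear_combination e22, by linear_combination e33⟩

def TwistedHadamardForm (M : Matrix (Fin 4) (Fin 4) ℝ) : Prop :=
  ∃ u v κ x y z : ℝ, u ^ 2 + v ^ 2 = 2 ∧ 0 < κ ∧
    0 < |x| ∧ |x| < 1 ∧ 0 < |y| ∧ |y| < 1 ∧ 0 < |z| ∧ |z| < 1 ∧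
    M = twistedHadamard u v * (κ • diagonal ![1, x, y, z]) * (twistedHadamard u v)ᵀ ∧
    (|x| ≠ |y| → u = 1 ∧ v = 1 ∧ z = -(x * y)) ∧
    (x = y → z = -x ^ 2) ∧
    (x = -y → (z = x ^ 2 ∨ (z = -x ^ 2 ∧ |u| ≠ |v|)))

lemma smul_diagonal_div {p : ℝ} (hp : p ≠ 0) (q s t : ℝ) :
    p • diagonal ![1, q / p, s / p, t / p] = diagonal ![p, q, s, t] := by
  rw [← diagonal_smul]
  congr 1
  ext i
  fin_cases i <;> simp [mul_div_cancel₀ _ hp]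

lemma twistedHadamardForm_of_diagonal {p q s t : ℝ} (hp : 0 < p) (hq : q ≠ 0) (hs : s ≠ 0)
    (ht : t ≠ 0) (hqp : q ^ 2 < p ^ 2) (hsp : s ^ 2 < p ^ 2) (htp : t ^ 2 < p ^ 2)
    (hqs : q * s = -(p * t)) :
    TwistedHadamardForm (hadamard4 * diagonal ![p, q, s, t] * hadamard4) := by
  have hz : t / p = -(q / p * (s / p)) := by
    field_simp
    linear_combination hqs
  refine ⟨1, 1, p, q / p, s / p, t / p, by norm_num, hp, (abs_div_pos_lt_one hq hqp).1,
    (abs_div_pos_lt_one hq hqp).2, (abs_div_pos_lt_one hs hsp).1, (abs_div_pos_lt_one hs hsp).2,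
    (abs_div_pos_lt_one ht htp).1, (abs_div_pos_lt_one ht htp).2, ?_, fun _ => ⟨rfl, rfl, hz⟩,
    fun hxy => by rw [hz, hxy]; ring, fun hxy => Or.inl (by rw [hz, hxy]; ring)⟩
  rw [smul_diagonal_div hp.ne', ← hadamard4, hadamard4_transpose]

lemma twistedHadamard_conj_smul_diagonal (u v κ x z : ℝ) :
    twistedHadamard u v * (κ • diagonal ![1, x, -x, z]) * (twistedHadamard u v)ᵀ =
      hadamard4 * block121 κ (κ * x * (u * v)) (κ * x * ((u ^ 2 - v ^ 2) / 2))
        (-(κ * x * (u * v))) (κ * z) * hadamard4 := by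
  ext i j
  rw [Matrix.mul_assoc, Matrix.mul_assoc]
  fin_cases i <;> fin_cases j <;>
    simp [hadamard4, twistedHadamard, block121, mul_apply, Fin.sum_univ_four] <;> ring

lemma twistedHadamardForm_of_rotation {p q r t : ℝ} (hp : 0 < p) (hr : r ≠ 0) (ht : t ≠ 0)
    (hqrp : q ^ 2 + r ^ 2 < p ^ 2) (htp : t ^ 2 < p ^ 2)
    (hqrt : (q ^ 2 + r ^ 2) ^ 2 = (p * t) ^ 2) :
    TwistedHadamardForm (hadamard4 * block121 p q r (-q) t * hadamard4) := by
  obtain ⟨u, v, huv, hq, hr'⟩ := exists_sq_add_sq_eq_two q r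
  set ρ := √(q ^ 2 + r ^ 2)
  have hρ2 : ρ ^ 2 = q ^ 2 + r ^ 2 := Real.sq_sqrt (by positivity)
  have hρ : 0 < ρ := Real.sqrt_pos.mpr (by positivity)
  have hx := abs_div_pos_lt_one hρ.ne' (hρ2 ▸ hqrp)
  have hxpos : 0 < ρ / p := div_pos hρ hp
  have hz : (t / p - (ρ / p) ^ 2) * (t / p + (ρ / p) ^ 2) = 0 := by
    field_simp
    linear_combination -hqrt - (ρ ^ 2 + q ^ 2 + r ^ 2) * hρ2
  refine ⟨u, v, p, ρ / p, -(ρ / p), t / p, huv, hp, hx.1, hx.2, (abs_neg (ρ / p)).symm ▸ hx.1,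
    (abs_neg (ρ / p)).symm ▸ hx.2, (abs_div_pos_lt_one ht htp).1, (abs_div_pos_lt_one ht htp).2,
    ?_, fun h => absurd (abs_neg _).symm h, fun h => by linarith, fun _ => ?_⟩
  · rw [twistedHadamard_conj_smul_diagonal, mul_div_cancel₀ _ hp.ne',
      mul_div_cancel₀ _ hp.ne', ← hq, ← hr']
  · rcases mul_eq_zero.mp hz with h | h
    · exact Or.inl (by linear_combination h)
    · refine Or.inr ⟨by linear_combination h, fun huv' => hr ?_⟩
      rw [hr', ← sq_abs u, ← sq_abs v, huv', sub_self, zero_div, mul_zero]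

lemma twistedHadamardForm_of_block121 {p q r s t : ℝ} {l : Fin 4 → ℝ} (hp : 0 < p)
    (hsq : block121 p q r s t * block121 p q r s t = diagonal l) (hl3 : 0 < l 3)
    (hl31 : l 3 < l 1) (hl32 : l 3 < l 2) (hl10 : l 1 < l 0) (hl20 : l 2 < l 0)
    (hl : l 1 * l 2 = l 0 * l 3)
    (hnotKron : ∀ A' B' : Matrix (Fin 2) (Fin 2) ℝ, A'.IsSymm → B'.IsSymm →
      hadamard4 * block121 p q r s t * hadamard4 ≠ kron4 A' B') :
    TwistedHadamardForm (hadamard4 * block121 p q r s t * hadamard4) := by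
  obtain ⟨hp2, hqr2, hrqs, hrs2, ht2⟩ := block121_mul_self_eq_diagonal hsq
  have ht : t ≠ 0 := by rintro rfl; linarith
  by_cases hr : r = 0
  · subst hr
    rw [block121_zero] at hnotKron ⊢
    norm_num at hqr2 hrs2
    have hq : q ≠ 0 := by rintro rfl; linarith
    have hs : s ≠ 0 := by rintro rfl; linarith
    have hqspt : (q * s - p * t) * (q * s + p * t) = 0 := by
      linear_combination s ^ 2 * hqr2 + l 1 * hrs2 - t ^ 2 * hp2 - l 0 * ht2 + hl
    rcases mul_eq_zero.mp hqspt with h | h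
    · exact absurd (hadamard4_conj_diagonal_eq_kron4 hp.ne' (by linear_combination h))
        (hnotKron _ _ (isSymm_fin_two _ _ _) (isSymm_fin_two _ _ _))
    · exact twistedHadamardForm_of_diagonal hp hq hs ht (by linarith) (by linarith)
        (by linarith) (by linear_combination h)
  · obtain rfl : s = -q := by linear_combination (mul_eq_zero.mp hrqs).resolve_left hr
    exact twistedHadamardForm_of_rotation hp hr ht (by linarith) (by linarith)
      (by linear_combination (r ^ 2 + q ^ 2) * hqr2 + l 1 * hrs2 - t ^ 2 * hp2 - l 0 * ht2 + hl)

lemma twistedHadamardForm_of_mul_self_eq_diagonal {N : Matrix (Fin 4) (Fin 4) ℝ}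
    (hN : N.IsSymm) (hN0 : 0 < N 0 0) {l : Fin 4 → ℝ} (hN2 : N * N = diagonal l) (hl3 : 0 < l 3)
    (hl31 : l 3 < l 1) (hl32 : l 3 < l 2) (hl10 : l 1 < l 0) (hl20 : l 2 < l 0)
    (hl : l 1 * l 2 = l 0 * l 3)
    (hnotKron : ∀ A' B' : Matrix (Fin 2) (Fin 2) ℝ, A'.IsSymm → B'.IsSymm →
      hadamard4 * N * hadamard4 ≠ kron4 A' B') :
    TwistedHadamardForm (hadamard4 * N * hadamard4) := by
  have hcomm : Commute N (diagonal l) := hN2 ▸ (Commute.refl N).mul_right (Commute.refl N)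
  rw [eq_block121_of_commute_diagonal hN hcomm (by linarith) (by linarith) (by linarith)
    (by linarith) (by linarith)] at hN2 hnotKron ⊢
  exact twistedHadamardForm_of_block121 hN0 hN2 hl3 hl31 hl32 hl10 hl20 hl hnotKron

theorem statement10_general (M : Matrix (Fin 4) (Fin 4) ℝ)
    (hMs : M.IsSymm) (hMpos : ∀ i j, 0 < M i j)
    (hnotensor : ¬ ∃ (σ : Equiv.Perm (Fin 4)) (A' B' : Matrix (Fin 2) (Fin 2) ℝ),
      A'.IsSymm ∧ B'.IsSymm ∧ ∀ i j, M (σ i) (σ j) = kron4 A' B' i j)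
    (A B : Matrix (Fin 2) (Fin 2) ℝ)
    (hA : A.PosDef) (hB : B.PosDef)
    (hApos : ∀ i j, 0 < A i j) (hBpos : ∀ i j, 0 < B i j)
    (hAd : A 0 0 = A 1 1) (hBd : B 0 0 = B 1 1)
    (hM2 : M * M = kron4 A B) :
    ∃ u v κ x y z : ℝ, u ^ 2 + v ^ 2 = 2 ∧ 0 < κ ∧
      0 < |x| ∧ |x| < 1 ∧ 0 < |y| ∧ |y| < 1 ∧ 0 < |z| ∧ |z| < 1 ∧
      M = ((1 / 2 : ℝ) • !![1, u, v, 1; 1, -v, u, -1; 1, v, -u, -1; 1, -u, -v, 1]) *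
          (κ • Matrix.diagonal ![1, x, y, z]) *
          ((1 / 2 : ℝ) • !![1, u, v, 1; 1, -v, u, -1; 1, v, -u, -1; 1, -u, -v, 1])ᵀ ∧
      (|x| ≠ |y| → u = 1 ∧ v = 1 ∧ z = -(x * y)) ∧
      (x = y → z = -x ^ 2) ∧
      (x = -y → (z = x ^ 2 ∨ (z = -x ^ 2 ∧ |u| ≠ |v|))) := by
  obtain ⟨a, b, rfl, hb, hba⟩ := hA.exists_eq_of_apply_zero_zero_eq (hApos 0 1) hAd
  obtain ⟨c, d, rfl, hd, hdc⟩ := hB.exists_eq_of_apply_zero_zero_eq (hBpos 0 1) hBd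
  have hN2 : (hadamard4 * M * hadamard4) * (hadamard4 * M * hadamard4) =
      diagonal (kronSpectrum a b c d) := by
    rw [hadamard4_conj_mul_conj, hM2, kron4_eq_hadamard4_conj, hadamard4_conj_conj]
  have hN0 : 0 < (hadamard4 * M * hadamard4) 0 0 := by
    rw [hadamard4_conj_apply_zero_zero]
    have := Finset.sum_pos (fun i _ => Finset.sum_pos (fun j _ => hMpos i j)
      Finset.univ_nonempty) Finset.univ_nonempty
    positivity
  obtain ⟨hl3, hl31, hl32, hl10, hl20, hl⟩ := kronSpectrum_spec hb hba hd hdc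
  have key := twistedHadamardForm_of_mul_self_eq_diagonal hMs.hadamard4_conj hN0 hN2
    hl3 hl31 hl32 hl10 hl20 hl fun A' B' hA' hB' h => hnotensor ⟨1, A', B', hA', hB',
      fun i j => by rw [Equiv.Perm.one_apply, Equiv.Perm.one_apply, ← h, hadamard4_conj_conj]⟩
  rwa [hadamard4_conj_conj] at key

/-- Let `M` be a `4 × 4` real symmetric invertible matrix with strictly
positive entries that is not isomorphic (under any simultaneous permutation of
rows and columns) to a Kronecker product of `2 × 2` real symmetric matrices,
and suppose `M² = A ⊗ B` for `2 × 2` symmetric positive definite matrices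
`A, B` with positive entries satisfying `A₁₁ = A₂₂`, `B₁₁ = B₂₂`.  Then
`M = K D Kᵀ` where `K` has rows `½(1,u,v,1)`, `½(1,−v,u,−1)`, `½(1,v,−u,−1)`,
`½(1,−u,−v,1)` with `u² + v² = 2`, and `D = κ·diag(1,x,y,z)` with `κ > 0` and
`0 < |x|,|y|,|z| < 1`; moreover (1) if `|x| ≠ |y|` then `u = v = 1` and
`z = −xy`; (2) if `x = y` then `z = −x²`; (3) if `x = −y` then either `z = x²`,
or `z = −x²` and `|u| ≠ |v|`. -/
theorem statement10 (M : Matrix (Fin 4) (Fin 4) ℝ)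
    (hMs : M.IsSymm) (hMdet : IsUnit M.det) (hMpos : ∀ i j, 0 < M i j)
    (hnotensor : ¬ ∃ (σ : Equiv.Perm (Fin 4)) (A' B' : Matrix (Fin 2) (Fin 2) ℝ),
      A'.IsSymm ∧ B'.IsSymm ∧ ∀ i j, M (σ i) (σ j) = kron4 A' B' i j)
    (A B : Matrix (Fin 2) (Fin 2) ℝ)
    (hA : A.PosDef) (hB : B.PosDef)
    (hApos : ∀ i j, 0 < A i j) (hBpos : ∀ i j, 0 < B i j)
    (hAd : A 0 0 = A 1 1) (hBd : B 0 0 = B 1 1)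
    (hM2 : M * M = kron4 A B) :
    ∃ u v κ x y z : ℝ, u ^ 2 + v ^ 2 = 2 ∧ 0 < κ ∧
      0 < |x| ∧ |x| < 1 ∧ 0 < |y| ∧ |y| < 1 ∧ 0 < |z| ∧ |z| < 1 ∧
      M = ((1 / 2 : ℝ) • !![1, u, v, 1; 1, -v, u, -1; 1, v, -u, -1; 1, -u, -v, 1]) *
          (κ • Matrix.diagonal ![1, x, y, z]) *
          ((1 / 2 : ℝ) • !![1, u, v, 1; 1, -v, u, -1; 1, v, -u, -1; 1, -u, -v, 1])ᵀ ∧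
      (|x| ≠ |y| → u = 1 ∧ v = 1 ∧ z = -(x * y)) ∧
      (x = y → z = -x ^ 2) ∧
      (x = -y → (z = x ^ 2 ∨ (z = -x ^ 2 ∧ |u| ≠ |v|))) :=
  statement10_general M hMs hMpos hnotensor A B hA hB hApos hBpos hAd hBd hM2
end

section
/- Let n be an odd positive integer, let H = (1/√2)·[[1,1],[1,−1]], and let λ₁', λ₂', μ₁', μ₂' ∈ ℝ. Suppose M is a 4×4 real symmetric matrix with Mⁿ = (H·diag(λ₁',λ₂')·Hᵀ) ⊗ (H·diag(μ₁',μ₂')·Hᵀ). Then M = (H·diag(λ₁,λ₂)·Hᵀ) ⊗ (H·diag(μ₁,μ₂)·Hᵀ), where λᵢ is the unique real number with λᵢⁿ = λᵢ' and μᵢ is the unique real number with μᵢⁿ = μᵢ'. In particular, M = A⊗B for 2×2 real symmetric matrices A, B with A₁₁ = A₂₂ and B₁₁ = B₂₂. -/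
/-!
For odd `n` the power map `x ↦ x ^ n` is an order automorphism of `ℝ`; applying its continuous
inverse through the continuous functional calculus recovers a self-adjoint `a` from `a ^ n`, so
odd powers are injective on real symmetric matrices. Conjugation by the orthogonal `H` and the
Kronecker product commute with powers, so the symmetric matrix `(H diag(λ) Hᵀ) ⊗ (H diag(μ) Hᵀ)`
with `λᵢ ^ n = λᵢ'`, `μᵢ ^ n = μᵢ'` has the same `n`-th power as `M`, hence equals `M`.
-/

open Matrix
open scoped Kronecker

theorem Real.surjective_pow_of_odd {n : ℕ} (hn : Odd n) :
    Function.Surjective fun x : ℝ => x ^ n := by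
  intro x
  rcases le_total 0 x with hx | hx
  · exact ⟨x ^ (n⁻¹ : ℝ), Real.rpow_inv_natCast_pow hx hn.pos.ne'⟩
  · refine ⟨-(-x) ^ (n⁻¹ : ℝ), ?_⟩
    simp only [hn.neg_pow, Real.rpow_inv_natCast_pow (neg_nonneg.2 hx) hn.pos.ne', neg_neg]

noncomputable def oddPowOrderIso {n : ℕ} (hn : Odd n) : ℝ ≃o ℝ :=
  StrictMono.orderIsoOfSurjective _ hn.strictMono_pow (Real.surjective_pow_of_odd hn)

theorem IsSelfAdjoint.eq_of_pow_eq_of_odd {A : Type*} [Ring A] [StarRing A] [Algebra ℝ A]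
    [TopologicalSpace A] [ContinuousFunctionalCalculus ℝ A IsSelfAdjoint]
    [ContinuousMap.UniqueHom ℝ A] {a b : A} (ha : IsSelfAdjoint a) (hb : IsSelfAdjoint b)
    {n : ℕ} (hn : Odd n) (h : a ^ n = b ^ n) : a = b := by
  have cfc_root_pow : ∀ c : A, IsSelfAdjoint c → cfc (oddPowOrderIso hn).symm (c ^ n) = c := by
    intro c hc
    rw [← cfc_comp_pow _ _ _ (oddPowOrderIso hn).symm.continuous.continuousOn hc]
    conv_rhs => rw [← cfc_id' ℝ c]
    exact cfc_congr fun x _ => (oddPowOrderIso hn).symm_apply_apply x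
  rw [← cfc_root_pow a ha, h, cfc_root_pow b hb]

theorem Matrix.pow_mul_diagonal_mul_transpose {m R : Type*} [Fintype m] [DecidableEq m]
    [CommRing R] {U : Matrix m m R} (hU : U * Uᵀ = 1) (v : m → R) (n : ℕ) :
    (U * diagonal v * Uᵀ) ^ n = U * diagonal (v ^ n) * Uᵀ := by
  let u : (Matrix m m R)ˣ := ⟨U, Uᵀ, hU, mul_eq_one_comm.mp hU⟩
  rw [← diagonal_pow]
  exact Units.conj_pow u (diagonal v) n

theorem Matrix.isSymm_mul_diagonal_mul_transpose {m R : Type*} [Fintype m] [DecidableEq m]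
    [CommSemiring R] (U : Matrix m m R) (v : m → R) : (U * diagonal v * Uᵀ).IsSymm := by
  rw [IsSymm, transpose_mul, transpose_mul, transpose_transpose, diagonal_transpose,
    Matrix.mul_assoc]

theorem kron4_eq_reindex_kronecker (A B : Matrix (Fin 2) (Fin 2) ℝ) :
    kron4 A B = reindex finProdFinEquiv finProdFinEquiv (A ⊗ₖ B) :=
  rfl

theorem kron4_mul (A B C D : Matrix (Fin 2) (Fin 2) ℝ) :
    kron4 (A * C) (B * D) = kron4 A B * kron4 C D := by
  simp only [kron4_eq_reindex_kronecker, mul_kronecker_mul, reindex_apply, submatrix_mul_equiv]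

theorem kron4_one : kron4 1 1 = 1 := by
  rw [kron4_eq_reindex_kronecker, one_kronecker_one, reindex_apply, submatrix_one_equiv]

theorem kron4_pow (A B : Matrix (Fin 2) (Fin 2) ℝ) (n : ℕ) :
    kron4 (A ^ n) (B ^ n) = kron4 A B ^ n := by
  induction n with
  | zero => exact kron4_one
  | succ n ih => rw [pow_succ, pow_succ, pow_succ, kron4_mul, ih]

theorem kron4_transpose (A B : Matrix (Fin 2) (Fin 2) ℝ) : (kron4 A B)ᵀ = kron4 Aᵀ Bᵀ :=
  rfl

theorem Matrix.IsSymm.isSelfAdjoint {m R : Type*} [Star R] [TrivialStar R] {A : Matrix m m R}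
    (h : A.IsSymm) : IsSelfAdjoint A :=
  (isHermitian_iff_isSymm.mpr h).isSelfAdjoint

theorem Matrix.IsSymm.kron4 {A B : Matrix (Fin 2) (Fin 2) ℝ} (hA : A.IsSymm) (hB : B.IsSymm) :
    (kron4 A B).IsSymm := by
  rw [IsSymm, kron4_transpose, hA.eq, hB.eq]

noncomputable def hadamard2 : Matrix (Fin 2) (Fin 2) ℝ := (Real.sqrt 2)⁻¹ • !![1, 1; 1, -1]

theorem hadamard2_mul_transpose : hadamard2 * hadamard2ᵀ = 1 := by
  ext i j
  fin_cases i <;> fin_cases j <;> norm_num [hadamard2, mul_apply, ← mul_inv]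

theorem hadamard2_conj_diagonal_apply_zero_zero_eq_one_one (v : Fin 2 → ℝ) :
    (hadamard2 * diagonal v * hadamard2ᵀ) 0 0 = (hadamard2 * diagonal v * hadamard2ᵀ) 1 1 := by
  simp [hadamard2, mul_apply, Fin.sum_univ_two, vecMul_diagonal]

theorem statement14_general (n : ℕ) (hodd : Odd n)
    (H : Matrix (Fin 2) (Fin 2) ℝ) (hH : H = (Real.sqrt 2)⁻¹ • !![1, 1; 1, -1])
    (lam₁' lam₂' mu₁' mu₂' : ℝ)
    (M : Matrix (Fin 4) (Fin 4) ℝ) (hMs : M.IsSymm)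
    (hMn : M ^ n = kron4 (H * Matrix.diagonal ![lam₁', lam₂'] * Hᵀ)
                         (H * Matrix.diagonal ![mu₁', mu₂'] * Hᵀ)) :
    ∃ lam₁ lam₂ mu₁ mu₂ : ℝ,
      lam₁ ^ n = lam₁' ∧ lam₂ ^ n = lam₂' ∧ mu₁ ^ n = mu₁' ∧ mu₂ ^ n = mu₂' ∧
      M = kron4 (H * Matrix.diagonal ![lam₁, lam₂] * Hᵀ)
                (H * Matrix.diagonal ![mu₁, mu₂] * Hᵀ) ∧
      (H * Matrix.diagonal ![lam₁, lam₂] * Hᵀ).IsSymm ∧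
      (H * Matrix.diagonal ![mu₁, mu₂] * Hᵀ).IsSymm ∧
      (H * Matrix.diagonal ![lam₁, lam₂] * Hᵀ) 0 0 =
        (H * Matrix.diagonal ![lam₁, lam₂] * Hᵀ) 1 1 ∧
      (H * Matrix.diagonal ![mu₁, mu₂] * Hᵀ) 0 0 =
        (H * Matrix.diagonal ![mu₁, mu₂] * Hᵀ) 1 1 := by
  obtain rfl : H = hadamard2 := hH
  let root := (oddPowOrderIso hodd).symm
  have root_pow (x : ℝ) : root x ^ n = x := (oddPowOrderIso hodd).apply_symm_apply x
  have conj_root_pow (a b : ℝ) :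
      (hadamard2 * diagonal ![root a, root b] * hadamard2ᵀ) ^ n =
        hadamard2 * diagonal ![a, b] * hadamard2ᵀ := by
    rw [pow_mul_diagonal_mul_transpose hadamard2_mul_transpose]
    congr 3
    ext i
    fin_cases i <;> exact root_pow _
  have hsymm (v : Fin 2 → ℝ) := isSymm_mul_diagonal_mul_transpose hadamard2 v
  refine ⟨root lam₁', root lam₂', root mu₁', root mu₂', root_pow _, root_pow _, root_pow _,
    root_pow _, ?_, hsymm _, hsymm _, hadamard2_conj_diagonal_apply_zero_zero_eq_one_one _,
    hadamard2_conj_diagonal_apply_zero_zero_eq_one_one _⟩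
  refine hMs.isSelfAdjoint.eq_of_pow_eq_of_odd ((hsymm _).kron4 (hsymm _)).isSelfAdjoint hodd ?_
  rw [hMn, ← kron4_pow, conj_root_pow, conj_root_pow]

/-- Let `n` be an odd positive integer, `H = (1/√2)·[[1,1],[1,−1]]`, and let
`M` be a `4 × 4` real symmetric matrix with
`Mⁿ = (H·diag(λ₁',λ₂')·Hᵀ) ⊗ (H·diag(μ₁',μ₂')·Hᵀ)`.  Then
`M = (H·diag(λ₁,λ₂)·Hᵀ) ⊗ (H·diag(μ₁,μ₂)·Hᵀ)` where `λᵢⁿ = λᵢ'` and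
`μᵢⁿ = μᵢ'`; in particular `M = A ⊗ B` for `2 × 2` real symmetric matrices
`A`, `B` with `A₁₁ = A₂₂` and `B₁₁ = B₂₂`. -/
theorem statement14 (n : ℕ) (hodd : Odd n) (hpos : 0 < n)
    (H : Matrix (Fin 2) (Fin 2) ℝ) (hH : H = (Real.sqrt 2)⁻¹ • !![1, 1; 1, -1])
    (lam₁' lam₂' mu₁' mu₂' : ℝ)
    (M : Matrix (Fin 4) (Fin 4) ℝ) (hMs : M.IsSymm)
    (hMn : M ^ n = kron4 (H * Matrix.diagonal ![lam₁', lam₂'] * Hᵀ)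
                         (H * Matrix.diagonal ![mu₁', mu₂'] * Hᵀ)) :
    ∃ lam₁ lam₂ mu₁ mu₂ : ℝ,
      lam₁ ^ n = lam₁' ∧ lam₂ ^ n = lam₂' ∧ mu₁ ^ n = mu₁' ∧ mu₂ ^ n = mu₂' ∧
      M = kron4 (H * Matrix.diagonal ![lam₁, lam₂] * Hᵀ)
                (H * Matrix.diagonal ![mu₁, mu₂] * Hᵀ) ∧
      (H * Matrix.diagonal ![lam₁, lam₂] * Hᵀ).IsSymm ∧
      (H * Matrix.diagonal ![mu₁, mu₂] * Hᵀ).IsSymm ∧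
      (H * Matrix.diagonal ![lam₁, lam₂] * Hᵀ) 0 0 =
        (H * Matrix.diagonal ![lam₁, lam₂] * Hᵀ) 1 1 ∧
      (H * Matrix.diagonal ![mu₁, mu₂] * Hᵀ) 0 0 =
        (H * Matrix.diagonal ![mu₁, mu₂] * Hᵀ) 1 1 :=
  statement14_general n hodd H hH lam₁' lam₂' mu₁' mu₂' M hMs hMn
end
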